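/- For the linear advection equation u_t + c u_x = 0 with c > 0 on the model mesh with one small cell I_k of length αh (α ∈ (0,1]) and upwind fluxes F_{i+1/2} = c U_i, the mixed explicit-implicit scheme (explicit update away from I_k, implicit fluxes at the faces x_{k±1/2}) is monotone: each updated value U_i^{n+1} is a convex combination of old values U^n, provided Δt ≤ h/c. -/

import Mathlib

/-!
Every value of the scheme is an average of upwind neighbours. An explicit step
`x - λ (x - y)` with `0 ≤ λ ≤ 1` (the CFL condition) is the convex combination
`(1 - λ) x + λ y`, and an implicit step `v = x - μ (v - y)` with `μ ≥ 0` solves to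
`v = (x + μ y) / (1 + μ)`, a convex combination for every `μ ≥ 0`. Sweeping the
cells `k - 1`, `k`, `k + 1` in upwind order, every `U_i^{n+1}` lies in the convex
hull of the old values.
-/

open Set

section ConvexUpdate

variable {E : Type*} [AddCommGroup E] [Module ℝ E] {s : Set E} {x y v : E}

theorem Convex.sub_smul_sub_mem (hs : Convex ℝ s) (hx : x ∈ s) (hy : y ∈ s) {l : ℝ}
    (h0 : 0 ≤ l) (h1 : l ≤ 1) : x - l • (x - y) ∈ s := by
  convert hs hx hy (sub_nonneg.2 h1) h0 (sub_add_cancel 1 l) using 1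
  module

theorem Convex.mem_of_eq_sub_smul_sub (hs : Convex ℝ s) (hx : x ∈ s) (hy : y ∈ s) {m : ℝ}
    (hm : 0 ≤ m) (hv : v = x - m • (v - y)) : v ∈ s := by
  have hm1 : (1 + m)⁻¹ * (1 + m) = 1 := inv_mul_cancel₀ (by positivity)
  have hsolve : v = (1 + m)⁻¹ • x + ((1 + m)⁻¹ * m) • y :=
    calc v = ((1 + m)⁻¹ * (1 + m)) • v := by rw [hm1, one_smul]
      _ = (1 + m)⁻¹ • (v + m • (v - y)) + ((1 + m)⁻¹ * m) • y := by module
      _ = (1 + m)⁻¹ • x + ((1 + m)⁻¹ * m) • y := by rw [eq_sub_iff_add_eq.1 hv]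
  rw [hsolve]
  exact hs hx hy (by positivity) (by positivity) (by rw [← mul_one_add, hm1])

end ConvexUpdate

theorem exists_sum_smul_eq_of_mem_convexHull_range {ι E : Type*} [AddCommGroup E] [Module ℝ E]
    {v : ι → E} {x : E} (hx : x ∈ convexHull ℝ (range v)) :
    ∃ (s : Finset ι) (w : ι → ℝ), (∀ j ∈ s, 0 ≤ w j) ∧ ∑ j ∈ s, w j = 1 ∧
      x = ∑ j ∈ s, w j • v j := by
  rw [convexHull_range_eq_exists_affineCombination] at hx
  obtain ⟨s, w, hw0, hw1, rfl⟩ := hx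
  exact ⟨s, w, hw0, hw1, s.affineCombination_eq_linear_combination v w hw1⟩

theorem mixed_explicit_implicit_monotone_general
    (c h α Δt : ℝ) (k : ℤ) (hc : 0 < c) (hh : 0 < h)
    (hα : 0 < α) (hΔt : 0 < Δt) (hCFL : Δt ≤ h / c)
    (U V : ℤ → ℝ)
    (hexpl : ∀ i : ℤ, (i ≤ k - 2 ∨ k + 2 ≤ i) →
      V i = U i - (c * Δt / h) * (U i - U (i - 1)))
    (hkm : V (k - 1) = U (k - 1) - (Δt / h) * (c * V (k - 1) - c * U (k - 2)))
    (hk : V k = U k - (Δt / (α * h)) * (c * V k - c * V (k - 1)))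
    (hkp : V (k + 1) = U (k + 1) - (Δt / h) * (c * U (k + 1) - c * V k)) :
    ∀ i : ℤ, ∃ (s : Finset ℤ) (w : ℤ → ℝ),
      (∀ j ∈ s, 0 ≤ w j) ∧ (∑ j ∈ s, w j) = 1 ∧ V i = ∑ j ∈ s, w j * U j := by
  set S := convexHull ℝ (range U)
  have hS : Convex ℝ S := convex_convexHull ℝ _
  have hU (j : ℤ) : U j ∈ S := subset_convexHull ℝ _ (mem_range_self j)
  have hCourant0 : 0 ≤ c * Δt / h := by positivity
  have hCourant1 : c * Δt / h ≤ 1 := by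
    rw [div_le_one hh, mul_comm]
    exact (le_div_iff₀ hc).1 hCFL
  have hVkm : V (k - 1) ∈ S :=
    hS.mem_of_eq_sub_smul_sub (hU _) (hU (k - 2)) hCourant0
      (by rw [smul_eq_mul]; linear_combination hkm)
  have hVk : V k ∈ S :=
    hS.mem_of_eq_sub_smul_sub (hU k) hVkm (m := c * Δt / (α * h)) (by positivity)
      (by rw [smul_eq_mul]; linear_combination hk)
  have hV (i : ℤ) : V i ∈ S := by
    by_cases hfar : i ≤ k - 2 ∨ k + 2 ≤ i
    · rw [hexpl i hfar, ← smul_eq_mul]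
      exact hS.sub_smul_sub_mem (hU i) (hU (i - 1)) hCourant0 hCourant1
    obtain rfl | rfl | rfl : i = k - 1 ∨ i = k ∨ i = k + 1 := by omega
    · exact hVkm
    · exact hVk
    · have hupwind : V (k + 1) = U (k + 1) - (c * Δt / h) • (U (k + 1) - V k) := by
        rw [smul_eq_mul]; linear_combination hkp
      exact hupwind ▸ hS.sub_smul_sub_mem (hU _) hVk hCourant0 hCourant1
  intro i
  simpa only [smul_eq_mul] using exists_sum_smul_eq_of_mem_convexHull_range (hV i)

/-- For linear advection `u_t + c u_x = 0` with `c > 0` on the model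
mesh with one small cell `I_k` of length `αh` (`α ∈ (0,1]`) and upwind fluxes
`F_{i+1/2} = c U_i`, the mixed explicit-implicit scheme is monotone: each updated
value `U_i^{n+1}` is a convex combination of old values `U^n`, provided `Δt ≤ h/c`. -/
theorem mixed_explicit_implicit_monotone
    (c h α Δt : ℝ) (k : ℤ) (hc : 0 < c) (hh : 0 < h)
    (hα : 0 < α) (hα1 : α ≤ 1) (hΔt : 0 < Δt) (hCFL : Δt ≤ h / c)
    (U V : ℤ → ℝ)
    (hexpl : ∀ i : ℤ, (i ≤ k - 2 ∨ k + 2 ≤ i) →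
      V i = U i - (c * Δt / h) * (U i - U (i - 1)))
    (hkm : V (k - 1) = U (k - 1) - (Δt / h) * (c * V (k - 1) - c * U (k - 2)))
    (hk : V k = U k - (Δt / (α * h)) * (c * V k - c * V (k - 1)))
    (hkp : V (k + 1) = U (k + 1) - (Δt / h) * (c * U (k + 1) - c * V k)) :
    ∀ i : ℤ, ∃ (s : Finset ℤ) (w : ℤ → ℝ),
      (∀ j ∈ s, 0 ≤ w j) ∧ (∑ j ∈ s, w j) = 1 ∧ V i = ∑ j ∈ s, w j * U j :=
  mixed_explicit_implicit_monotone_general c h α Δt k hc hh hα hΔt hCFL U V hexpl hkm hk hkp
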